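/- For any CRT excursion g and sign sequence s, the shuffled points b'_i, i ∈ ℕ, are dense in [0,1]. -/

import Mathlib

open MeasureTheory Set

noncomputable section

/-- `x` is not a one-sided minimum of `g`. -/
def NotOneSidedMin (g : ℝ → ℝ) (x : ℝ) : Prop :=
  x ∈ Set.Ioo (0:ℝ) 1 ∧ ∀ ε > 0, (∃ x₁ ∈ Set.Ioo (x-ε) x, g x₁ < g x) ∧
    (∃ x₂ ∈ Set.Ioo x (x+ε), g x₂ < g x)

/-- `b` is an inner local minimum of `g`. -/
def IsInnerLocalMin (g : ℝ → ℝ) (b : ℝ) : Prop :=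
  b ∈ Set.Ioo (0:ℝ) 1 ∧ ∃ ε > 0, ∀ x ∈ Set.Ioo (b-ε) (b+ε), g b ≤ g x

/-- `b` is a strict (inner) local minimum of `g`. -/
def IsStrictLocalMin (g : ℝ → ℝ) (b : ℝ) : Prop :=
  b ∈ Set.Ioo (0:ℝ) 1 ∧ ∃ ε > 0, ∀ x ∈ Set.Ioo (b-ε) (b+ε), x ≠ b → g b < g x

/-- A CRT excursion. -/
structure IsCRT (g : ℝ → ℝ) : Prop where
  cont : ContinuousOn g (Set.Icc 0 1)
  nonneg : ∀ t ∈ Set.Icc (0:ℝ) 1, 0 ≤ g t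
  pos : ∀ t ∈ Set.Ioo (0:ℝ) 1, 0 < g t
  zero0 : g 0 = 0
  zero1 : g 1 = 0
  dense_min : ∀ x ∈ Set.Icc (0:ℝ) 1, x ∈ closure {b | IsInnerLocalMin g b}
  distinct : ∀ b b', IsInnerLocalMin g b → IsInnerLocalMin g b' → g b = g b' → b = b'
  leaves_full : volume {x | NotOneSidedMin g x} = 1

/-- `β` is the unique minimum point of `g` on `[x,y]`, lies in `(x,y)`,
and is a strict local minimum: the most recent common ancestor of `x < y`. -/
def IsMrca (g : ℝ → ℝ) (β x y : ℝ) : Prop :=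
  x < y ∧ β ∈ Set.Ioo x y ∧ IsStrictLocalMin g β ∧
    (∀ t ∈ Set.Icc x y, g β ≤ g t) ∧ (∀ t ∈ Set.Icc x y, g t = g β → t = β)

/-- `x` and `y` are `g`-comparable. -/
def GComparable (g : ℝ → ℝ) (x y : ℝ) : Prop :=
  ∃ β, IsMrca g β (min x y) (max x y)

/-- `b` enumerates (injectively) the strict local minima of `g`. -/
def IsEnum (g : ℝ → ℝ) (b : ℕ → ℝ) : Prop :=
  Function.Injective b ∧ ∀ β, IsStrictLocalMin g β ↔ ∃ i, b i = β

/-- The sign-shuffled comparison relation `u ⊲ v` : if the mrca of `u,v` carries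
sign `⊕` (`true`) then the smaller goes first, otherwise the bigger goes first. -/
def Tri (g : ℝ → ℝ) (b : ℕ → ℝ) (s : ℕ → Bool) (u v : ℝ) : Prop :=
  ∃ i, (IsMrca g (b i) u v ∧ s i = true) ∨ (IsMrca g (b i) v u ∧ s i = false)

/-- The measure-preserving function `φ_{g,s}`. -/
def phi (g : ℝ → ℝ) (b : ℕ → ℝ) (s : ℕ → Bool) (t : ℝ) : ℝ :=
  (volume {u ∈ Set.Icc (0:ℝ) 1 | Tri g b s u t}).toReal

def aPt (g : ℝ → ℝ) (β : ℝ) : ℝ := sSup {t | t < β ∧ g t = g β}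
def cPt (g : ℝ → ℝ) (β : ℝ) : ℝ := sInf {t | β < t ∧ g t = g β}

def aI (g : ℝ → ℝ) (b : ℕ → ℝ) (i : ℕ) : ℝ := aPt g (b i)
def cI (g : ℝ → ℝ) (b : ℕ → ℝ) (i : ℕ) : ℝ := cPt g (b i)
def aI' (g : ℝ → ℝ) (b : ℕ → ℝ) (s : ℕ → Bool) (i : ℕ) : ℝ := phi g b s (aI g b i)
def cI' (g : ℝ → ℝ) (b : ℕ → ℝ) (s : ℕ → Bool) (i : ℕ) : ℝ :=
  aI' g b s i + (cI g b i - aI g b i)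
def bI' (g : ℝ → ℝ) (b : ℕ → ℝ) (s : ℕ → Bool) (i : ℕ) : ℝ :=
  aI' g b s i + (if s i then b i - aI g b i else cI g b i - b i)

/-- The permuton `μ_{g,s} = (Id, φ_{g,s})_* Leb`. -/
def permuton (g : ℝ → ℝ) (b : ℕ → ℝ) (s : ℕ → Bool) : Measure (ℝ × ℝ) :=
  Measure.map (fun t => (t, phi g b s t)) (volume.restrict (Set.Icc 0 1))

/-- Property (A) of a signed excursion. -/
def PropA (g : ℝ → ℝ) (b : ℕ → ℝ) (s : ℕ → Bool) : Prop :=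
  ∀ i j, i ≠ j →
    Set.Icc (aI' g b s j) (cI' g b s j) ⊆ Set.Icc (aI' g b s i) (cI' g b s i) →
    (∀ y ∈ Set.Icc (g (b i)) (g (b j)),
      y ∈ closure {h | ∃ l, h = g (b l) ∧
        Set.Icc (aI' g b s l) (cI' g b s l) ⊆ Set.Icc (aI' g b s i) (cI' g b s i) ∧
        Set.Icc (aI' g b s j) (cI' g b s j) ⊆ Set.Icc (bI' g b s l) (cI' g b s l)}) ∧
    (∀ y ∈ Set.Icc (g (b i)) (g (b j)),
      y ∈ closure {h | ∃ l, h = g (b l) ∧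
        Set.Icc (aI' g b s l) (cI' g b s l) ⊆ Set.Icc (aI' g b s i) (cI' g b s i) ∧
        Set.Icc (aI' g b s j) (cI' g b s j) ⊆ Set.Icc (aI' g b s l) (bI' g b s l)})

/-- The shuffled excursion `f_{g,s}`. -/
def fShuffle (g : ℝ → ℝ) (b : ℕ → ℝ) (s : ℕ → Bool) (t : ℝ) : ℝ :=
  ⨆ i, Set.indicator (Set.Icc (aI' g b s i) (cI' g b s i)) (fun _ => g (b i)) t

/-- Topological support of a measure. -/
def mSupport {α : Type*} [TopologicalSpace α] [MeasurableSpace α] (μ : Measure α) : Set α :=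
  {x | ∀ U : Set α, IsOpen U → x ∈ U → μ U ≠ 0}


/-!
Order the leaves by `u ⊲ v` when `u` lies in the half of the excursion `(aᵢ, cᵢ)` of their most
recent common ancestor `bᵢ` that the sign `sᵢ` explores first, and `v` in the other half. Then
`φ t = Leb {u ⊲ t}` is monotone, and for `t` inside `(aᵢ, cᵢ)` the set `{u ⊲ t}` is `{u ⊲ aᵢ}`
together with a part of `[aᵢ, cᵢ]`: the whole first half if `t` lies in the second one, and at most
the first half otherwise. Hence `φ p ≤ b'ᵢ ≤ φ q` whenever `p ⊲ q` have ancestor `bᵢ`, and it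
suffices that `φ` takes dense values on the leaves.

Between any `u ⊲ v ⊲ w` lies a whole half-excursion, so `φ u < φ w`; thus no three leaves share a
value of `φ`, and the image `ν` of Lebesgue measure on the leaves under `φ` is atomless. Since the
leaves have full measure, the distribution function `F` of `ν` fixes every value `φ t` of a leaf.
A gap `(α, β)` in these values would give points `c ≤ α < β ≤ d` fixed by the continuous `F` with
`ν (c, d) = 0`, i.e. `F c = F d`.
-/

open ProbabilityTheory

section CDF

variable (ν : Measure ℝ) [IsProbabilityMeasure ν] [NullSingletonClass ν]

lemma continuous_cdf_of_nullSingletonClass : Continuous (cdf ν) := by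
  refine continuous_iff_continuousAt.2 fun x => ?_
  rw [(cdf ν).mono.continuousAt_iff_leftLim_eq_rightLim, StieltjesFunction.rightLim_eq]
  have hatom := (cdf ν).measure_singleton x
  rw [measure_cdf, measure_singleton, eq_comm, ENNReal.ofReal_eq_zero] at hatom
  exact le_antisymm ((cdf ν).mono.leftLim_le le_rfl) (by linarith)

lemma Ioo_inter_nonempty_of_cdf_eqOn {T : Set ℝ} (hT : EqOn (cdf ν) id T) (h0 : 0 ∈ T)
    (h1 : 1 ∈ T) (hgap : ∀ c d, Ioo c d ∩ T = ∅ → ν (Ioo c d) = 0) {α β : ℝ} (hα : 0 ≤ α)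
    (hαβ : α < β) (hβ : β ≤ 1) : (Ioo α β ∩ T).Nonempty := by
  by_contra hempty
  rw [not_nonempty_iff_eq_empty] at hempty
  have hS : (T ∩ Iic α).Nonempty := ⟨0, h0, hα⟩
  have hS' : (T ∩ Ici β).Nonempty := ⟨1, h1, hβ⟩
  have hSbdd : BddAbove (T ∩ Iic α) := ⟨α, fun t ht => ht.2⟩
  have hS'bdd : BddBelow (T ∩ Ici β) := ⟨β, fun t ht => ht.2⟩
  set c := sSup (T ∩ Iic α)
  set d := sInf (T ∩ Ici β)
  have hfix := hT.closure (continuous_cdf_of_nullSingletonClass ν) continuous_id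
  have hc : cdf ν c = c := hfix (closure_mono inter_subset_left (csSup_mem_closure hS hSbdd))
  have hd : cdf ν d = d := hfix (closure_mono inter_subset_left (csInf_mem_closure hS' hS'bdd))
  have hcd : Ioo c d ∩ T = ∅ := by
    refine eq_empty_of_forall_notMem fun t ⟨⟨hct, htd⟩, htT⟩ => ?_
    rcases le_or_gt t α with htα | htα
    · exact (le_csSup hSbdd ⟨htT, htα⟩).not_gt hct
    rcases lt_or_ge t β with htβ | htβ
    · exact hempty.subset ⟨⟨htα, htβ⟩, htT⟩
    · exact (csInf_le hS'bdd ⟨htT, htβ⟩).not_gt htd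
  have hνcd := hgap c d hcd
  rw [measure_congr Ioo_ae_eq_Ioc, ← measure_cdf ν, StieltjesFunction.measure_Ioc, hc, hd,
    ENNReal.ofReal_eq_zero] at hνcd
  linarith [csSup_le hS fun t ht => ht.2, le_csInf hS' fun t ht => ht.2]

end CDF

lemma Icc_subset_Ioo_of_notMem {a c x y w : ℝ} (hw : w ∈ Icc a c) (hwxy : w ∈ Icc x y)
    (hx : x ∉ Icc a c) (hy : y ∉ Icc a c) : Icc a c ⊆ Ioo x y := by
  intro t ht
  rw [mem_Icc] at *
  exact ⟨lt_of_not_ge fun h => hx ⟨by linarith, by linarith⟩,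
    lt_of_not_ge fun h => hy ⟨by linarith, by linarith⟩⟩

lemma volume_ne_top_of_subset_Icc {A : Set ℝ} {a c : ℝ} (h : A ⊆ Icc a c) : volume A ≠ ⊤ :=
  (measure_lt_top_of_subset h measure_Icc_lt_top.ne).ne

lemma IsStrictLocalMin.isInnerLocalMin {g : ℝ → ℝ} {β : ℝ} (h : IsStrictLocalMin g β) :
    IsInnerLocalMin g β := by
  obtain ⟨hβ, ε, hε, hlt⟩ := h
  refine ⟨hβ, ε, hε, fun x hx => ?_⟩
  rcases eq_or_ne x β with rfl | hne
  exacts [le_rfl, (hlt x hx hne).le]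

lemma IsEnum.isStrictLocalMin {g : ℝ → ℝ} {b : ℕ → ℝ} (hb : IsEnum g b) (i : ℕ) :
    IsStrictLocalMin g (b i) :=
  (hb.2 (b i)).2 ⟨i, rfl⟩

lemma aPt_spec_of {g : ℝ → ℝ} {l β δ : ℝ} (hl : l < β) (hcont : ContinuousOn g (Icc l β))
    (hgl : g l < g β) (hδ : 0 < δ) (hloc : ∀ t ∈ Ioo (β - δ) β, g β < g t) :
    aPt g β ∈ Ioo l β ∧ g (aPt g β) = g β ∧ ∀ t ∈ Ioo (aPt g β) β, g β < g t := by
  set T := {t | t < β ∧ g t = g β}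
  have hTδ : ∀ t ∈ T, t ≤ β - δ := fun t ht => not_lt.1 fun h => (hloc t ⟨h, ht.1⟩).ne' ht.2
  obtain ⟨t₁, ht₁, ht₁β⟩ := exists_between (max_lt hl (sub_lt_self β hδ))
  have hgt₁ : g β < g t₁ := hloc t₁ ⟨(le_max_right _ _).trans_lt ht₁, ht₁β⟩
  have hlt₁ : l ≤ t₁ := (le_max_left _ _).trans ht₁.le
  obtain ⟨t₀, ht₀, hgt₀⟩ := intermediate_value_Icc hlt₁
    (hcont.mono (Icc_subset_Icc_right ht₁β.le)) ⟨hgl.le, hgt₁.le⟩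
  have ht₀T : t₀ ∈ T := ⟨ht₀.2.trans_lt ht₁β, hgt₀⟩
  -- `aPt g β` is also the supremum of the closed set `C`, hence lies in it
  set C := Icc l (β - δ) ∩ g ⁻¹' {g β}
  have ht₀C : t₀ ∈ C := ⟨⟨ht₀.1, hTδ t₀ ht₀T⟩, hgt₀⟩
  have hCT : C ⊆ T := fun t ht => ⟨ht.1.2.trans_lt (sub_lt_self β hδ), ht.2⟩
  have haC : aPt g β = sSup C := csSup_eq_csSup_of_forall_exists_le
    (fun t ht => (le_total t t₀).elim (fun h => ⟨t₀, ht₀C, h⟩)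
      fun h => ⟨t, ⟨⟨ht₀.1.trans h, hTδ t ht⟩, ht.2⟩, le_rfl⟩)
    fun t ht => ⟨t, hCT ht, le_rfl⟩
  have hC : IsClosed C := ContinuousOn.preimage_isClosed_of_isClosed
    (hcont.mono (Icc_subset_Icc_right (by linarith))) isClosed_Icc isClosed_singleton
  have ha : aPt g β ∈ C := haC ▸ hC.csSup_mem ⟨t₀, ht₀C⟩ ⟨β - δ, fun t ht => ht.1.2⟩
  have hga : g (aPt g β) = g β := ha.2
  refine ⟨⟨ha.1.1.lt_of_ne fun h => hgl.ne (h ▸ hga), ha.1.2.trans_lt (sub_lt_self β hδ)⟩, hga,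
    fun t ht => ?_⟩
  by_contra! hgt
  rcases lt_or_ge (β - δ) t with htδ | htδ
  · exact (hloc t ⟨htδ, ht.2⟩).not_ge hgt
  have htt₁ : t ≤ t₁ := htδ.trans ((le_max_right _ _).trans ht₁.le)
  obtain ⟨w, hw, hgw⟩ := intermediate_value_Icc htt₁
    (hcont.mono (Icc_subset_Icc (ha.1.1.trans ht.1.le) ht₁β.le)) ⟨hgt, hgt₁.le⟩
  have hwT : w ∈ T := ⟨hw.2.trans_lt ht₁β, hgw⟩
  exact (le_csSup ⟨β, fun u hu => hu.1.le⟩ hwT).not_gt (ht.1.trans_le hw.1)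

lemma cPt_eq_neg_aPt (g : ℝ → ℝ) (β : ℝ) : cPt g β = -aPt (fun x => g (-x)) (-β) := by
  rw [cPt, aPt, Real.sInf_def]
  congr 2
  ext t
  simp only [mem_neg, mem_ofPred_eq, neg_neg, lt_neg]

namespace IsCRT

variable {g : ℝ → ℝ} (hg : IsCRT g)
include hg

lemma isStrictLocalMin_of_isInnerLocalMin {β : ℝ} (h : IsInnerLocalMin g β) :
    IsStrictLocalMin g β := by
  obtain ⟨⟨hβ0, hβ1⟩, ε, hε, hmin⟩ := h
  set δ := min ε (min β (1 - β))
  have hδε : δ ≤ ε := min_le_left _ _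
  have hδβ : δ ≤ β := (min_le_right _ _).trans (min_le_left _ _)
  have hδβ' : δ ≤ 1 - β := (min_le_right _ _).trans (min_le_right _ _)
  refine ⟨⟨hβ0, hβ1⟩, δ, lt_min hε (lt_min hβ0 (by linarith)), fun x hx hne => ?_⟩
  obtain ⟨hx1, hx2⟩ := hx
  refine (hmin x ⟨by linarith, by linarith⟩).lt_of_ne fun heq => hne ?_
  -- `x` would be a second inner local minimum at the height of `β`
  refine hg.distinct x β ⟨⟨by linarith, by linarith⟩, δ - |x - β|, ?_, fun y hy => ?_⟩
    ⟨⟨hβ0, hβ1⟩, ε, hε, hmin⟩ heq.symm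
  · rw [gt_iff_lt, sub_pos, abs_sub_lt_iff]; constructor <;> linarith
  · rw [← heq]
    obtain ⟨hy1, hy2⟩ := hy
    obtain ⟨h₁, h₂⟩ := abs_le.1 (le_refl |x - β|)
    exact hmin y ⟨by linarith, by linarith⟩

variable {β : ℝ} (hβ : IsStrictLocalMin g β)
include hβ

lemma aPt_spec : aPt g β ∈ Ioo 0 β ∧ g (aPt g β) = g β ∧ ∀ t ∈ Ioo (aPt g β) β, g β < g t := by
  obtain ⟨⟨hβ0, hβ1⟩, ε, hε, hlt⟩ := hβ
  refine aPt_spec_of hβ0 (hg.cont.mono (Icc_subset_Icc_right hβ1.le)) ?_ hε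
    fun t ht => hlt t ⟨ht.1, by linarith [ht.2]⟩ ht.2.ne
  rw [hg.zero0]
  exact hg.pos β ⟨hβ0, hβ1⟩

lemma cPt_spec : cPt g β ∈ Ioo β 1 ∧ g (cPt g β) = g β ∧ ∀ t ∈ Ioo β (cPt g β), g β < g t := by
  obtain ⟨⟨hβ0, hβ1⟩, ε, hε, hlt⟩ := hβ
  have hcont : ContinuousOn (fun x => g (-x)) (Icc (-1) (-β)) :=
    hg.cont.comp continuousOn_neg fun x hx => ⟨by linarith [hx.2], by linarith [hx.1]⟩
  obtain ⟨⟨h1, h2⟩, hga, hgt⟩ := aPt_spec_of (by linarith) hcont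
    (by simpa [hg.zero1] using hg.pos β ⟨hβ0, hβ1⟩) hε
    fun t ht => by
      simpa using hlt (-t) ⟨by linarith [ht.2], by linarith [ht.1]⟩ (by linarith [ht.2])
  rw [cPt_eq_neg_aPt]
  refine ⟨⟨by linarith, by linarith⟩, by simpa using hga, fun t ht => ?_⟩
  simpa using hgt (-t) ⟨by linarith [ht.2], by linarith [ht.1]⟩

lemma le_of_mem_Icc {t : ℝ} (ht : t ∈ Icc (aPt g β) (cPt g β)) : g β ≤ g t := by
  obtain ⟨-, hga, hgta⟩ := hg.aPt_spec hβ
  obtain ⟨-, hgc, hgtc⟩ := hg.cPt_spec hβ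
  rcases ht.1.eq_or_lt with rfl | h₁
  · exact hga.ge
  rcases ht.2.eq_or_lt with rfl | h₂
  · exact hgc.ge
  rcases lt_trichotomy t β with h | rfl | h
  exacts [(hgta t ⟨h₁, h⟩).le, le_rfl, (hgtc t ⟨h, h₂⟩).le]

lemma lt_of_mem_Ioo {t : ℝ} (ht : t ∈ Ioo (aPt g β) (cPt g β)) (hne : t ≠ β) : g β < g t := by
  rcases hne.lt_or_gt with h | h
  exacts [(hg.aPt_spec hβ).2.2 t ⟨ht.1, h⟩, (hg.cPt_spec hβ).2.2 t ⟨h, ht.2⟩]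

end IsCRT

/-- The two halves `(aᵢ, bᵢ)` (`true`) and `(bᵢ, cᵢ)` (`false`) of the excursion interval above
`b i`; under the signs `s` the half `half g b i (s i)` is explored first. -/
def half (g : ℝ → ℝ) (b : ℕ → ℝ) (i : ℕ) : Bool → Set ℝ
  | true => Ioo (aI g b i) (b i)
  | false => Ioo (b i) (cI g b i)

lemma disjoint_half (g : ℝ → ℝ) (b : ℕ → ℝ) (i : ℕ) (σ : Bool) :
    Disjoint (half g b i σ) (half g b i (!σ)) := by
  cases σ
  exacts [disjoint_left.2 fun x h₁ h₂ => h₁.1.not_gt h₂.2,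
    disjoint_left.2 fun x h₁ h₂ => h₁.2.not_gt h₂.1]

lemma measurableSet_half (g : ℝ → ℝ) (b : ℕ → ℝ) (i : ℕ) (σ : Bool) :
    MeasurableSet (half g b i σ) := by
  cases σ <;> exact measurableSet_Ioo

lemma measurableSet_iUnion_half_prod_half (g : ℝ → ℝ) (b : ℕ → ℝ) (s : ℕ → Bool) :
    MeasurableSet (⋃ i, half g b i (!s i) ×ˢ half g b i (s i)) :=
  MeasurableSet.iUnion fun i => (measurableSet_half g b i _).prod (measurableSet_half g b i _)

namespace IsCRT

variable {g : ℝ → ℝ} (hg : IsCRT g)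
include hg

lemma mem_Ioo_of_isMrca {β x y : ℝ} (h : IsMrca g β x y) :
    x ∈ Ioo (aPt g β) β ∧ y ∈ Ioo β (cPt g β) := by
  obtain ⟨-, ⟨hxβ, hβy⟩, hβ, -, huniq⟩ := h
  obtain ⟨⟨-, ha⟩, hga, -⟩ := hg.aPt_spec hβ
  obtain ⟨⟨hc, -⟩, hgc, -⟩ := hg.cPt_spec hβ
  exact ⟨⟨lt_of_not_ge fun h => ha.ne (huniq _ ⟨h, ha.le.trans hβy.le⟩ hga), hxβ⟩,
    ⟨hβy, lt_of_not_ge fun h => hc.ne' (huniq _ ⟨hxβ.le.trans hc.le, h⟩ hgc)⟩⟩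

lemma isMrca_of_mem {β u v : ℝ} (hβ : IsStrictLocalMin g β) (hu : u ∈ Ioo (aPt g β) β)
    (hv : v ∈ Ioo β (cPt g β)) : IsMrca g β u v := by
  refine ⟨hu.2.trans hv.1, ⟨hu.2, hv.1⟩, hβ,
    fun t ht => hg.le_of_mem_Icc hβ ⟨hu.1.le.trans ht.1, ht.2.trans hv.2.le⟩, fun t ht hgt => ?_⟩
  by_contra hne
  exact (hg.lt_of_mem_Ioo hβ ⟨hu.1.trans_le ht.1, ht.2.trans_lt hv.2⟩ hne).ne' hgt

variable {b : ℕ → ℝ} (hb : IsEnum g b)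
include hb

lemma aI_lt (i : ℕ) : aI g b i < b i := (hg.aPt_spec (hb.isStrictLocalMin i)).1.2

lemma lt_cI (i : ℕ) : b i < cI g b i := (hg.cPt_spec (hb.isStrictLocalMin i)).1.1

lemma g_aI (i : ℕ) : g (aI g b i) = g (b i) := (hg.aPt_spec (hb.isStrictLocalMin i)).2.1

lemma g_cI (i : ℕ) : g (cI g b i) = g (b i) := (hg.cPt_spec (hb.isStrictLocalMin i)).2.1

lemma aI_le_cI (i : ℕ) : aI g b i ≤ cI g b i := ((hg.aI_lt hb i).trans (hg.lt_cI hb i)).le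

lemma aI_mem_Icc (i : ℕ) : aI g b i ∈ Icc (aI g b i) (cI g b i) :=
  left_mem_Icc.2 (hg.aI_le_cI hb i)

lemma Icc_aI_cI_subset (i : ℕ) : Icc (aI g b i) (cI g b i) ⊆ Icc 0 1 :=
  Icc_subset_Icc (hg.aPt_spec (hb.isStrictLocalMin i)).1.1.le
    (hg.cPt_spec (hb.isStrictLocalMin i)).1.2.le

lemma g_ne {i j : ℕ} (hij : i ≠ j) : g (b i) ≠ g (b j) := fun h =>
  hij (hb.1 (hg.distinct _ _ (hb.isStrictLocalMin i).isInnerLocalMin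
    (hb.isStrictLocalMin j).isInnerLocalMin h))

lemma half_subset_Ioo (i : ℕ) (σ : Bool) : half g b i σ ⊆ Ioo (aI g b i) (cI g b i) := by
  cases σ
  exacts [Ioo_subset_Ioo_left (hg.aI_lt hb i).le, Ioo_subset_Ioo_right (hg.lt_cI hb i).le]

lemma half_subset_Icc (i : ℕ) (σ : Bool) : half g b i σ ⊆ Icc (aI g b i) (cI g b i) :=
  (hg.half_subset_Ioo hb i σ).trans Ioo_subset_Icc_self

lemma volume_real_half (i : ℕ) (σ : Bool) :
    volume.real (half g b i σ) = if σ then b i - aI g b i else cI g b i - b i := by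
  cases σ
  exacts [Real.volume_real_Ioo_of_le (hg.lt_cI hb i).le,
    Real.volume_real_Ioo_of_le (hg.aI_lt hb i).le]

lemma volume_real_Icc_sdiff_half (i : ℕ) (σ : Bool) :
    volume.real (Icc (aI g b i) (cI g b i) \ half g b i (!σ)) = volume.real (half g b i σ) := by
  rw [measureReal_sdiff (hg.half_subset_Icc hb i _) (measurableSet_half g b i _)
    (volume_ne_top_of_subset_Icc subset_rfl), Real.volume_real_Icc_of_le (hg.aI_le_cI hb i),
    hg.volume_real_half hb, hg.volume_real_half hb]
  cases σ <;> simp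

lemma g_lt_g_of_mem_half {i : ℕ} {σ : Bool} {x : ℝ} (hx : x ∈ half g b i σ) : g (b i) < g x := by
  refine hg.lt_of_mem_Ioo (hb.isStrictLocalMin i) (hg.half_subset_Ioo hb i σ hx) ?_
  cases σ
  exacts [hx.1.ne', hx.2.ne]

lemma notMem_Icc_of_lt {i j : ℕ} (hlt : g (b j) < g (b i)) {x : ℝ} (hx : g x = g (b j)) :
    x ∉ Icc (aI g b i) (cI g b i) := fun h =>
  (hlt.trans_le (hg.le_of_mem_Icc (hb.isStrictLocalMin i) h)).ne' hx

lemma Icc_subset_half_of_lt {i j : ℕ} (hlt : g (b j) < g (b i)) {σ : Bool} {w : ℝ}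
    (hw : w ∈ Icc (aI g b i) (cI g b i)) (hwj : w ∈ half g b j σ) :
    Icc (aI g b i) (cI g b i) ⊆ half g b j σ := by
  have hout : ∀ {x}, g x = g (b j) → x ∉ Icc (aI g b i) (cI g b i) := hg.notMem_Icc_of_lt hb hlt
  cases σ
  exacts [Icc_subset_Ioo_of_notMem hw (Ioo_subset_Icc_self hwj) (hout rfl) (hout (hg.g_cI hb j)),
    Icc_subset_Ioo_of_notMem hw (Ioo_subset_Icc_self hwj) (hout (hg.g_aI hb j)) (hout rfl)]

lemma Icc_subset_Ioo_of_lt {i j : ℕ} (hlt : g (b j) < g (b i)) {w : ℝ}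
    (hw : w ∈ Icc (aI g b i) (cI g b i)) (hwj : w ∈ Icc (aI g b j) (cI g b j)) :
    Icc (aI g b i) (cI g b i) ⊆ Ioo (aI g b j) (cI g b j) :=
  Icc_subset_Ioo_of_notMem hw hwj (hg.notMem_Icc_of_lt hb hlt (hg.g_aI hb j))
    (hg.notMem_Icc_of_lt hb hlt (hg.g_cI hb j))

lemma Icc_subset_half_or {i j : ℕ} (hij : i ≠ j) {σ τ : Bool} {w : ℝ}
    (hi : w ∈ half g b i σ) (hj : w ∈ half g b j τ) :
    Icc (aI g b i) (cI g b i) ⊆ half g b j τ ∨ Icc (aI g b j) (cI g b j) ⊆ half g b i σ := by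
  rcases (hg.g_ne hb hij).lt_or_gt with h | h
  · exact Or.inr (hg.Icc_subset_half_of_lt hb h (hg.half_subset_Icc hb j τ hj) hi)
  · exact Or.inl (hg.Icc_subset_half_of_lt hb h (hg.half_subset_Icc hb i σ hi) hj)

lemma Icc_subset_half_of_notMem {i j : ℕ} {σ τ : Bool} {u x : ℝ}
    (hu : u ∉ Icc (aI g b i) (cI g b i)) (huj : u ∈ half g b j σ)
    (hx : x ∈ Icc (aI g b i) (cI g b i)) (hxj : x ∈ half g b j τ) :
    Icc (aI g b i) (cI g b i) ⊆ half g b j τ := by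
  have hij : i ≠ j := by
    rintro rfl
    exact hu (hg.half_subset_Icc hb i σ huj)
  rcases (hg.g_ne hb hij).lt_or_gt with h | h
  · exact absurd (Ioo_subset_Icc_self (hg.Icc_subset_Ioo_of_lt hb h
      (hg.half_subset_Icc hb j τ hxj) hx (hg.half_subset_Icc hb j σ huj))) hu
  · exact hg.Icc_subset_half_of_lt hb h hx hxj

variable {s : ℕ → Bool}

lemma tri_iff {u v : ℝ} :
    Tri g b s u v ↔ ∃ i, u ∈ half g b i (s i) ∧ v ∈ half g b i (!s i) := by
  constructor
  · rintro ⟨i, ⟨hM, hsi⟩ | ⟨hM, hsi⟩⟩ <;> obtain ⟨hl, hr⟩ := hg.mem_Ioo_of_isMrca hM <;>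
      refine ⟨i, ?_, ?_⟩ <;> rw [hsi] <;> assumption
  · rintro ⟨i, hu, hv⟩
    have hβ := hb.isStrictLocalMin i
    cases hsi : s i <;> rw [hsi] at hu hv
    · exact ⟨i, Or.inr ⟨hg.isMrca_of_mem hβ hv hu, hsi⟩⟩
    · exact ⟨i, Or.inl ⟨hg.isMrca_of_mem hβ hu hv, hsi⟩⟩

lemma tri_irrefl (u : ℝ) : ¬ Tri g b s u u := by
  rw [hg.tri_iff hb]
  rintro ⟨i, h₁, h₂⟩
  exact disjoint_left.1 (disjoint_half g b i (s i)) h₁ h₂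

lemma tri_trans {u v w : ℝ} (huv : Tri g b s u v) (hvw : Tri g b s v w) : Tri g b s u w := by
  rw [hg.tri_iff hb] at huv hvw ⊢
  obtain ⟨i, hu, hv⟩ := huv
  obtain ⟨j, hv', hw⟩ := hvw
  have hij : i ≠ j := by
    rintro rfl
    exact disjoint_left.1 (disjoint_half g b i (s i)) hv' hv
  rcases hg.Icc_subset_half_or hb hij hv hv' with h | h
  · exact ⟨j, h (hg.half_subset_Icc hb i _ hu), hw⟩
  · exact ⟨i, hu, h (hg.half_subset_Icc hb j _ hw)⟩

lemma tri_asymm {u v : ℝ} (huv : Tri g b s u v) (hvu : Tri g b s v u) : False :=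
  hg.tri_irrefl hb u (hg.tri_trans hb huv hvu)

lemma exists_half_subset_between {u v w : ℝ} (huv : Tri g b s u v) (hvw : Tri g b s v w) :
    ∃ i σ, half g b i σ ⊆ {x | Tri g b s u x ∧ Tri g b s x w} := by
  rw [hg.tri_iff hb] at huv hvw
  obtain ⟨i, hu, hv⟩ := huv
  obtain ⟨j, hv', hw⟩ := hvw
  have hij : i ≠ j := by
    rintro rfl
    exact disjoint_left.1 (disjoint_half g b i (s i)) hv' hv
  simp only [hg.tri_iff hb]
  rcases hg.Icc_subset_half_or hb hij hv hv' with h | h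
  · exact ⟨i, !s i, fun x hx => ⟨⟨i, hu, hx⟩, ⟨j, h (hg.half_subset_Icc hb i _ hx), hw⟩⟩⟩
  · exact ⟨j, s j, fun x hx => ⟨⟨i, hu, h (hg.half_subset_Icc hb j _ hx)⟩, ⟨j, hx, hw⟩⟩⟩

lemma tri_iff_tri_aI {i : ℕ} {u t : ℝ} (hu : u ∉ Icc (aI g b i) (cI g b i))
    (ht : t ∈ Ioo (aI g b i) (cI g b i)) : Tri g b s u t ↔ Tri g b s u (aI g b i) := by
  rw [hg.tri_iff hb, hg.tri_iff hb]
  exact exists_congr fun j => and_congr_right fun huj =>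
    ⟨fun htj => hg.Icc_subset_half_of_notMem hb hu huj (Ioo_subset_Icc_self ht) htj
        (hg.aI_mem_Icc hb i),
      fun haj => hg.Icc_subset_half_of_notMem hb hu huj (hg.aI_mem_Icc hb i) haj
        (Ioo_subset_Icc_self ht)⟩

lemma not_tri_aI {i : ℕ} {u : ℝ} (hu : u ∈ Icc (aI g b i) (cI g b i)) :
    ¬ Tri g b s u (aI g b i) := by
  rw [hg.tri_iff hb]
  rintro ⟨j, huj, haj⟩
  have hlt : g (b j) < g (b i) := hg.g_aI hb i ▸ hg.g_lt_g_of_mem_half hb haj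
  exact disjoint_left.1 (disjoint_half g b j (s j)) huj
    (hg.Icc_subset_half_of_lt hb hlt (hg.aI_mem_Icc hb i) haj hu)

end IsCRT

def leaves (g : ℝ → ℝ) : Set ℝ := {x | NotOneSidedMin g x}

lemma leaves_subset (g : ℝ → ℝ) : leaves g ⊆ Icc 0 1 := fun _ hx => Ioo_subset_Icc_self hx.1

def precSet (g : ℝ → ℝ) (b : ℕ → ℝ) (s : ℕ → Bool) (t : ℝ) : Set ℝ :=
  {u ∈ Icc (0:ℝ) 1 | Tri g b s u t}

lemma phi_eq_volume_real (g : ℝ → ℝ) (b : ℕ → ℝ) (s : ℕ → Bool) (t : ℝ) :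
    phi g b s t = volume.real (precSet g b s t) := rfl

lemma volume_precSet_ne_top (g : ℝ → ℝ) (b : ℕ → ℝ) (s : ℕ → Bool) (t : ℝ) :
    volume (precSet g b s t) ≠ ⊤ :=
  volume_ne_top_of_subset_Icc fun _ hu => hu.1

namespace IsCRT

variable {g : ℝ → ℝ} (hg : IsCRT g)
include hg

lemma volume_leaves : volume (leaves g) = 1 := hg.leaves_full

/-- `leaves g` is not known to be measurable, so this goes through Carathéodory's criterion
for `A`. -/
lemma volume_inter_leaves {A : Set ℝ} (hA : MeasurableSet A) (hA01 : A ⊆ Icc 0 1) :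
    volume (A ∩ leaves g) = volume A := by
  refine le_antisymm (measure_mono inter_subset_left) ?_
  have hIcc := measure_inter_add_sdiff (μ := volume) (Icc (0:ℝ) 1) hA
  have hleaves := measure_inter_add_sdiff (μ := volume) (leaves g) hA
  rw [inter_eq_right.2 hA01, Real.volume_Icc, sub_zero, ENNReal.ofReal_one] at hIcc
  rw [hg.volume_leaves, ← hIcc, inter_comm] at hleaves
  refine ENNReal.le_of_add_le_add_right (volume_ne_top_of_subset_Icc sdiff_subset)
    (hleaves.symm.trans_le ?_)
  exact add_le_add le_rfl (measure_mono (sdiff_subset_sdiff_left (leaves_subset g)))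

variable {b : ℕ → ℝ} (hb : IsEnum g b)
include hb

lemma exists_isMrca_of_leaves {p q : ℝ} (hp : p ∈ leaves g)
    (hq : q ∈ leaves g) (hpq : p < q) : ∃ i, IsMrca g (b i) p q := by
  obtain ⟨m, hm, hmin⟩ := isCompact_Icc.exists_isMinOn (nonempty_Icc.2 hpq.le)
    (hg.cont.mono (Icc_subset_Icc hp.1.1.le hq.1.2.le))
  -- leaves are not one-sided minima, so the minimum is not attained at `p` or `q`
  have hmp : g m < g p := by
    obtain ⟨-, x, hx, hgx⟩ := hp.2 (q - p) (sub_pos.2 hpq)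
    exact (hmin ⟨hx.1.le, by linarith [hx.2]⟩).trans_lt hgx
  have hmq : g m < g q := by
    obtain ⟨⟨x, hx, hgx⟩, -⟩ := hq.2 (q - p) (sub_pos.2 hpq)
    exact (hmin ⟨by linarith [hx.1], hx.2.le⟩).trans_lt hgx
  have hIoo : ∀ t ∈ Icc p q, g t = g m → t ∈ Ioo p q := fun t ht htm =>
    ⟨ht.1.lt_of_ne (by rintro rfl; exact hmp.ne' htm),
      ht.2.lt_of_ne (by rintro rfl; exact hmq.ne' htm)⟩
  have hinner : ∀ t ∈ Icc p q, g t = g m → IsInnerLocalMin g t := by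
    intro t ht htm
    obtain ⟨htp, htq⟩ := hIoo t ht htm
    refine ⟨⟨hp.1.1.trans htp, htq.trans hq.1.2⟩, min (t - p) (q - t),
      lt_min (sub_pos.2 htp) (sub_pos.2 htq), fun x hx => htm ▸ hmin ⟨?_, ?_⟩⟩
    · linarith [hx.1, min_le_left (t - p) (q - t)]
    · linarith [hx.2, min_le_right (t - p) (q - t)]
  have hm_inner := hinner m hm rfl
  obtain ⟨i, rfl⟩ := (hb.2 m).1 (hg.isStrictLocalMin_of_isInnerLocalMin hm_inner)
  exact ⟨i, hpq, hIoo _ hm rfl, hb.isStrictLocalMin i, fun t ht => hmin ht,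
    fun t ht htm => hg.distinct t _ (hinner t ht htm) hm_inner htm⟩

lemma tri_total (s : ℕ → Bool) {p q : ℝ} (hp : p ∈ leaves g)
    (hq : q ∈ leaves g) (hpq : p ≠ q) : Tri g b s p q ∨ Tri g b s q p := by
  wlog h : p < q generalizing p q
  · exact (this hq hp hpq.symm (hpq.lt_or_gt.resolve_left h)).symm
  obtain ⟨i, hM⟩ := hg.exists_isMrca_of_leaves hb hp hq h
  cases hsi : s i
  exacts [Or.inr ⟨i, Or.inr ⟨hM, hsi⟩⟩, Or.inl ⟨i, Or.inl ⟨hM, hsi⟩⟩]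

variable {s : ℕ → Bool}

lemma precSet_eq_preimage (t : ℝ) :
    precSet g b s t = Prod.mk t ⁻¹' ⋃ i, half g b i (!s i) ×ˢ half g b i (s i) := by
  ext u
  simp only [precSet, mem_ofPred_eq, mem_preimage, mem_iUnion, mem_prod, hg.tri_iff hb]
  exact ⟨fun ⟨_, i, hu, ht⟩ => ⟨i, ht, hu⟩, fun ⟨i, ht, hu⟩ =>
    ⟨hg.Icc_aI_cI_subset hb i (hg.half_subset_Icc hb i _ hu), i, hu, ht⟩⟩

lemma measurableSet_precSet (t : ℝ) : MeasurableSet (precSet g b s t) := by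
  rw [hg.precSet_eq_preimage hb]
  exact measurable_prodMk_left (measurableSet_iUnion_half_prod_half g b s)

lemma measurable_phi : Measurable (phi g b s) := by
  show Measurable fun t => (volume (precSet g b s t)).toReal
  simp only [hg.precSet_eq_preimage hb]
  exact (measurable_measure_prodMk_left (measurableSet_iUnion_half_prod_half g b s)).ennreal_toReal

lemma precSet_mono {p q : ℝ} (h : Tri g b s p q) : precSet g b s p ⊆ precSet g b s q :=
  fun _ hu => ⟨hu.1, hg.tri_trans hb hu.2 h⟩

lemma phi_mono {p q : ℝ} (h : Tri g b s p q) : phi g b s p ≤ phi g b s q :=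
  measureReal_mono (hg.precSet_mono hb h) (volume_precSet_ne_top g b s q)

lemma phi_lt_of_tri_of_tri {p q r : ℝ} (hpr : Tri g b s p r) (hrq : Tri g b s r q) :
    phi g b s p < phi g b s q := by
  obtain ⟨i, σ, hsub⟩ := hg.exists_half_subset_between hb hpr hrq
  have hdisj : Disjoint (precSet g b s p) (half g b i σ) :=
    disjoint_left.2 fun x hx hxh => hg.tri_asymm hb hx.2 (hsub hxh).1
  have hunion : precSet g b s p ∪ half g b i σ ⊆ precSet g b s q := union_subset
    (hg.precSet_mono hb (hg.tri_trans hb hpr hrq)) fun x hx =>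
      ⟨hg.Icc_aI_cI_subset hb i (hg.half_subset_Icc hb i σ hx), (hsub hx).2⟩
  have hpos : 0 < volume.real (half g b i σ) := by
    rw [hg.volume_real_half hb]
    cases σ <;> simp [hg.aI_lt hb i, hg.lt_cI hb i]
  rw [phi_eq_volume_real, phi_eq_volume_real]
  calc volume.real (precSet g b s p) < volume.real (precSet g b s p) + volume.real (half g b i σ) :=
        lt_add_of_pos_right _ hpos
    _ = volume.real (precSet g b s p ∪ half g b i σ) :=
        (measureReal_union hdisj (measurableSet_half g b i σ) (volume_precSet_ne_top g b s p)
          (volume_ne_top_of_subset_Icc (hg.half_subset_Icc hb i σ))).symm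
    _ ≤ volume.real (precSet g b s q) := measureReal_mono hunion (volume_precSet_ne_top g b s q)

lemma precSet_sdiff_Icc {i : ℕ} {t : ℝ} (ht : t ∈ Ioo (aI g b i) (cI g b i)) :
    precSet g b s t \ Icc (aI g b i) (cI g b i) = precSet g b s (aI g b i) := by
  ext u
  refine ⟨fun ⟨⟨hu01, hut⟩, hu⟩ => ⟨hu01, (hg.tri_iff_tri_aI hb hu ht).1 hut⟩,
    fun ⟨hu01, hua⟩ => ?_⟩
  have hu : u ∉ Icc (aI g b i) (cI g b i) := fun h => hg.not_tri_aI hb h hua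
  exact ⟨⟨hu01, (hg.tri_iff_tri_aI hb hu ht).2 hua⟩, hu⟩

lemma phi_eq_phi_aI_add {i : ℕ} {t : ℝ} (ht : t ∈ Ioo (aI g b i) (cI g b i)) :
    phi g b s t = phi g b s (aI g b i) +
      volume.real (precSet g b s t ∩ Icc (aI g b i) (cI g b i)) := by
  rw [phi_eq_volume_real, phi_eq_volume_real, ← hg.precSet_sdiff_Icc hb ht, add_comm,
    measureReal_inter_add_sdiff measurableSet_Icc (volume_precSet_ne_top g b s t)]

lemma bI'_eq (i : ℕ) :
    bI' g b s i = phi g b s (aI g b i) + volume.real (half g b i (s i)) := by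
  rw [hg.volume_real_half hb, bI', aI']

lemma phi_le_bI' {i : ℕ} {p : ℝ} (hp : p ∈ half g b i (s i)) : phi g b s p ≤ bI' g b s i := by
  set I := Icc (aI g b i) (cI g b i)
  have hsub : precSet g b s p ∩ I ⊆ I \ half g b i (!s i) := fun x hx =>
    ⟨hx.2, fun hx' => hg.tri_asymm hb hx.1.2 ((hg.tri_iff hb).2 ⟨i, hp, hx'⟩)⟩
  rw [hg.phi_eq_phi_aI_add hb (hg.half_subset_Ioo hb i _ hp), hg.bI'_eq hb,
    ← hg.volume_real_Icc_sdiff_half hb]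
  exact add_le_add le_rfl (measureReal_mono hsub (volume_ne_top_of_subset_Icc sdiff_subset))

lemma bI'_le_phi {i : ℕ} {q : ℝ} (hq : q ∈ half g b i (!s i)) : bI' g b s i ≤ phi g b s q := by
  have hsub : half g b i (s i) ⊆ precSet g b s q ∩ Icc (aI g b i) (cI g b i) := fun x hx =>
    ⟨⟨hg.Icc_aI_cI_subset hb i (hg.half_subset_Icc hb i _ hx), (hg.tri_iff hb).2 ⟨i, hx, hq⟩⟩,
      hg.half_subset_Icc hb i _ hx⟩
  rw [hg.phi_eq_phi_aI_add hb (hg.half_subset_Ioo hb i _ hq), hg.bI'_eq hb]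
  exact add_le_add le_rfl (measureReal_mono hsub (volume_ne_top_of_subset_Icc inter_subset_right))

end IsCRT

/-- In fact the uniform law on `[0,1]`, since `phi g b s` preserves Lebesgue measure. -/
def leafLaw (g : ℝ → ℝ) (b : ℕ → ℝ) (s : ℕ → Bool) : Measure ℝ :=
  Measure.map (phi g b s) (volume.restrict (leaves g))

namespace IsCRT

variable {g : ℝ → ℝ} (hg : IsCRT g) {b : ℕ → ℝ} (hb : IsEnum g b) {s : ℕ → Bool}
include hg hb

lemma leafLaw_apply {S : Set ℝ} (hS : MeasurableSet S) :
    leafLaw g b s S = volume (phi g b s ⁻¹' S ∩ leaves g) := by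
  rw [leafLaw, Measure.map_apply (hg.measurable_phi hb) hS,
    Measure.restrict_apply (hg.measurable_phi hb hS)]

lemma isProbabilityMeasure_leafLaw : IsProbabilityMeasure (leafLaw g b s) :=
  ⟨by rw [hg.leafLaw_apply hb MeasurableSet.univ, preimage_univ, univ_inter, hg.volume_leaves]⟩

lemma finite_phi_preimage_singleton_inter_leaves (c : ℝ) :
    (phi g b s ⁻¹' {c} ∩ leaves g).Finite := by
  by_contra hinf
  set e := Set.Infinite.natEmbedding _ hinf
  have hmem : ∀ n, phi g b s (e n) = c ∧ (e n : ℝ) ∈ leaves g := fun n => (e n).2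
  have total : ∀ {m n : ℕ}, m ≠ n → Tri g b s (e m) (e n) ∨ Tri g b s (e n) (e m) :=
    fun h => hg.tri_total hb s (hmem _).2 (hmem _).2 fun h' => h (e.injective (Subtype.ext h'))
  have between : ∀ {m n k : ℕ}, Tri g b s (e m) (e n) → Tri g b s (e n) (e k) → False :=
    fun h₁ h₂ => (hg.phi_lt_of_tri_of_tri hb h₁ h₂).ne ((hmem _).1.trans (hmem _).1.symm)
  -- any orientation of the three pairs among `e 0, e 1, e 2` contains a path of length two
  rcases total (m := 0) (n := 1) (by decide) with h₁ | h₁ <;>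
  rcases total (m := 1) (n := 2) (by decide) with h₂ | h₂ <;>
  rcases total (m := 0) (n := 2) (by decide) with h₃ | h₃
  all_goals
    first
    | exact between h₁ h₂
    | exact between h₂ h₁
    | exact between h₁ h₃
    | exact between h₃ h₁
    | exact between h₂ h₃
    | exact between h₃ h₂

lemma nullSingletonClass_leafLaw : NullSingletonClass (leafLaw g b s) :=
  ⟨fun c => by
    rw [hg.leafLaw_apply hb (measurableSet_singleton c)]
    exact (hg.finite_phi_preimage_singleton_inter_leaves hb c).measure_zero _⟩

lemma cdf_leafLaw_phi {t : ℝ} (ht : t ∈ leaves g) :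
    cdf (leafLaw g b s) (phi g b s t) = phi g b s t := by
  have := hg.isProbabilityMeasure_leafLaw hb (s := s)
  have := hg.nullSingletonClass_leafLaw hb (s := s)
  suffices h : leafLaw g b s (Iic (phi g b s t)) = volume (precSet g b s t) by
    rw [cdf_eq_real, measureReal_def, h]
    rfl
  apply le_antisymm
  · rw [← measure_congr Iio_ae_eq_Iic, hg.leafLaw_apply hb measurableSet_Iio]
    refine measure_mono fun u ⟨hu, hul⟩ => ⟨leaves_subset g hul, ?_⟩
    refine (hg.tri_total hb s hul ht ?_).resolve_right fun h => (hg.phi_mono hb h).not_gt hu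
    rintro rfl
    exact lt_irrefl (phi g b s u) hu
  · rw [hg.leafLaw_apply hb measurableSet_Iic,
      ← hg.volume_inter_leaves (hg.measurableSet_precSet hb t) fun _ hu => hu.1]
    exact measure_mono fun u ⟨hu, hul⟩ => ⟨hg.phi_mono hb hu.2, hul⟩

lemma cdf_leafLaw_zero : cdf (leafLaw g b s) 0 = 0 := by
  have := hg.isProbabilityMeasure_leafLaw hb (s := s)
  have := hg.nullSingletonClass_leafLaw hb (s := s)
  have hempty : phi g b s ⁻¹' Iio 0 = ∅ :=
    eq_empty_of_forall_notMem fun u hu => measureReal_nonneg.not_gt hu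
  rw [cdf_eq_real, ← measureReal_congr Iio_ae_eq_Iic, measureReal_def,
    hg.leafLaw_apply hb measurableSet_Iio, hempty, empty_inter, measure_empty, ENNReal.toReal_zero]

lemma cdf_leafLaw_one : cdf (leafLaw g b s) 1 = 1 := by
  have := hg.isProbabilityMeasure_leafLaw hb (s := s)
  have huniv : phi g b s ⁻¹' Iic 1 = univ := eq_univ_of_forall fun u =>
    (measureReal_mono (fun _ hu => hu.1) (volume_ne_top_of_subset_Icc subset_rfl)).trans_eq
      (by simp : volume.real (Icc (0:ℝ) 1) = 1)
  rw [cdf_eq_real, measureReal_def, hg.leafLaw_apply hb measurableSet_Iic, huniv, univ_inter,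
    hg.volume_leaves, ENNReal.toReal_one]

lemma exists_leaf_phi_mem_Ioo {α β : ℝ} (hα : 0 ≤ α) (hαβ : α < β) (hβ : β ≤ 1) :
    ∃ t ∈ leaves g, phi g b s t ∈ Ioo α β := by
  have := hg.isProbabilityMeasure_leafLaw hb (s := s)
  have := hg.nullSingletonClass_leafLaw hb (s := s)
  set T := insert 0 (insert 1 (phi g b s '' leaves g))
  have hT : EqOn (cdf (leafLaw g b s)) id T := by
    rintro _ (rfl | rfl | ⟨t, ht, rfl⟩)
    exacts [hg.cdf_leafLaw_zero hb, hg.cdf_leafLaw_one hb, hg.cdf_leafLaw_phi hb ht]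
  have hgap : ∀ c d, Ioo c d ∩ T = ∅ → leafLaw g b s (Ioo c d) = 0 := by
    intro c d h
    have hempty : phi g b s ⁻¹' Ioo c d ∩ leaves g = ∅ :=
      eq_empty_of_forall_notMem fun u ⟨hu, hul⟩ =>
        h.subset ⟨hu, mem_insert_of_mem _ (mem_insert_of_mem _ ⟨u, hul, rfl⟩)⟩
    rw [hg.leafLaw_apply hb measurableSet_Ioo, hempty, measure_empty]
  obtain ⟨x, hx, hxT⟩ := Ioo_inter_nonempty_of_cdf_eqOn _ hT (mem_insert _ _)
    (mem_insert_of_mem _ (mem_insert _ _)) hgap hα hαβ hβ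
  rcases hxT with rfl | rfl | ⟨t, ht, rfl⟩
  exacts [absurd hx.1 hα.not_gt, absurd hx.2 hβ.not_gt, ⟨t, ht, hx⟩]

lemma exists_bI'_mem_Ioo {α β : ℝ} (hα : 0 ≤ α) (hαβ : α < β) (hβ : β ≤ 1) :
    ∃ i, bI' g b s i ∈ Ioo α β := by
  obtain ⟨p, hp, hpαβ⟩ := hg.exists_leaf_phi_mem_Ioo hb (s := s) hα hαβ hβ
  obtain ⟨q, hq, hqαp⟩ := hg.exists_leaf_phi_mem_Ioo hb (s := s) hα hpαβ.1 (hpαβ.2.le.trans hβ)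
  have hqp : Tri g b s q p := by
    refine (hg.tri_total hb s hq hp ?_).resolve_right fun h => (hg.phi_mono hb h).not_gt hqαp.2
    rintro rfl
    exact lt_irrefl _ hqαp.2
  obtain ⟨i, hqi, hpi⟩ := (hg.tri_iff hb).1 hqp
  exact ⟨i, hqαp.1.trans_le (hg.phi_le_bI' hb hqi), (hg.bI'_le_phi hb hpi).trans_lt hpαβ.2⟩

end IsCRT

/-- The shuffled branching points `b'_i` are dense in `[0,1]`. -/
theorem stmt13 (g : ℝ → ℝ) (hg : IsCRT g) (b : ℕ → ℝ) (hb : IsEnum g b) (s : ℕ → Bool) :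
    ∀ x ∈ Set.Icc (0:ℝ) 1, x ∈ closure (Set.range (bI' g b s)) := by
  intro x hx
  refine Metric.mem_closure_iff.2 fun ε hε => ?_
  obtain ⟨i, hi⟩ := hg.exists_bI'_mem_Ioo hb (s := s) (le_max_left 0 (x - ε))
    (max_lt (lt_min one_pos (by linarith [hx.1])) (lt_min (by linarith [hx.2]) (by linarith)))
    (min_le_left 1 (x + ε))
  refine ⟨_, mem_range_self i, ?_⟩
  rw [Real.dist_eq, abs_lt]
  constructor <;> linarith [le_max_right 0 (x - ε), min_le_right 1 (x + ε), hi.1, hi.2]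

end
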